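/- arXiv:2405.00165 — 6 statements merged into one kernel-verified Lean document; each statement's English description precedes it below -/
import Mathlib

section
/- Let X and Y be nonempty separable complete metric spaces and let f : X → Y be of class Baire one. Then for every n ∈ ℕ the set D_{f,n} = {x ∈ X : ∀δ > 0, ∃ y, z ∈ B_X(x, δ), d_Y(f(y), f(z)) ≥ 1/n} has empty interior in X. -/
/-!
Fix `ε > 0` and let `F m` be the set of points at which the approximating sequence stays within
`ε` of its `m`-th term from `m` on. Each `F m` is closed by continuity of the `g j`, and the
`F m` cover `X` because the sequences `g j x` are Cauchy. By the Baire category theorem the union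
of their interiors is dense. On `F m` the limit `f` is `ε`-close to the continuous `g m`, so near
an interior point of `F m` the oscillation of `f` is below `4 ε`. Hence points of small
oscillation are dense, which is exactly the statement that `D_{f,n}` has empty interior.
-/

open Filter Metric Set Topology

section

variable {X Y : Type*} [PseudoMetricSpace Y] {f : X → Y} {g : ℕ → X → Y} {ε : ℝ}

def settledFrom (g : ℕ → X → Y) (ε : ℝ) (m : ℕ) : Set X :=
  {x | ∀ j ≥ m, dist (g j x) (g m x) ≤ ε}

theorem isClosed_settledFrom [TopologicalSpace X] (hg : ∀ m, Continuous (g m)) (m : ℕ) :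
    IsClosed (settledFrom g ε m) := by
  simp only [settledFrom, ofPred_forall]
  exact isClosed_biInter fun j _ => isClosed_le ((hg j).dist (hg m)) continuous_const

theorem iUnion_settledFrom (hg : ∀ x, CauchySeq fun m => g m x) (hε : 0 < ε) :
    ⋃ m, settledFrom g ε m = univ := by
  refine eq_univ_of_forall fun x => mem_iUnion.2 ?_
  obtain ⟨m, hm⟩ := cauchySeq_iff'.1 (hg x) ε hε
  exact ⟨m, fun j hj => (hm j hj).le⟩

theorem dist_le_of_mem_settledFrom {x : X} {y : Y} (hxy : Tendsto (fun m => g m x) atTop (𝓝 y))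
    {m : ℕ} (hx : x ∈ settledFrom g ε m) : dist y (g m x) ≤ ε :=
  isClosed_closedBall.mem_of_tendsto hxy (eventually_atTop.2 ⟨m, hx⟩)

theorem exists_ball_dist_lt_of_mem_interior_settledFrom [PseudoMetricSpace X] {m : ℕ}
    (hgm : Continuous (g m)) (hconv : ∀ x, Tendsto (fun m => g m x) atTop (𝓝 (f x)))
    (hε : 0 < ε) {x : X} (hx : x ∈ interior (settledFrom g ε m)) :
    ∃ δ > 0, ∀ y ∈ ball x δ, ∀ z ∈ ball x δ, dist (f y) (f z) < 4 * ε := by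
  obtain ⟨r, hr, hball⟩ := isOpen_iff.1 isOpen_interior x hx
  obtain ⟨ρ, hρ, hcont⟩ := Metric.continuous_iff.1 hgm x ε hε
  refine ⟨min r ρ, lt_min hr hρ, fun y hy z hz => ?_⟩
  have hyF : y ∈ settledFrom g ε m :=
    interior_subset (hball (ball_subset_ball (min_le_left r ρ) hy))
  have hzF : z ∈ settledFrom g ε m :=
    interior_subset (hball (ball_subset_ball (min_le_left r ρ) hz))
  have hyx : dist (g m y) (g m x) < ε := hcont y (ball_subset_ball (min_le_right r ρ) hy)
  have hzx : dist (g m z) (g m x) < ε := hcont z (ball_subset_ball (min_le_right r ρ) hz)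
  have hfy : dist (f y) (g m y) ≤ ε := dist_le_of_mem_settledFrom (hconv y) hyF
  have hfz : dist (f z) (g m z) ≤ ε := dist_le_of_mem_settledFrom (hconv z) hzF
  have hyz : dist (g m y) (g m z) ≤ dist (g m y) (g m x) + dist (g m z) (g m x) := by
    simpa only [dist_comm (g m x)] using dist_triangle (g m y) (g m x) (g m z)
  calc dist (f y) (f z)
      ≤ dist (f y) (g m y) + dist (g m y) (g m z) + dist (g m z) (f z) := dist_triangle4 _ _ _ _
    _ < 4 * ε := by rw [dist_comm (g m z)]; linarith

theorem dense_setOf_exists_ball_dist_lt [PseudoMetricSpace X] [BaireSpace X]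
    (hg : ∀ m, Continuous (g m)) (hconv : ∀ x, Tendsto (fun m => g m x) atTop (𝓝 (f x)))
    (hε : 0 < ε) :
    Dense {x | ∃ δ > 0, ∀ y ∈ ball x δ, ∀ z ∈ ball x δ, dist (f y) (f z) < ε} := by
  have hε4 : 0 < ε / 4 := by positivity
  refine (dense_iUnion_interior_of_closed (isClosed_settledFrom hg)
    (iUnion_settledFrom (fun x => (hconv x).cauchySeq) hε4)).mono ?_
  rintro x ⟨_, ⟨m, rfl⟩, hx⟩
  have := exists_ball_dist_lt_of_mem_interior_settledFrom (hg m) hconv hε4 hx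
  rwa [mul_div_cancel₀ ε four_ne_zero] at this

end

theorem stmt_1_general {X Y : Type*} [MetricSpace X] [MetricSpace Y]
    [CompleteSpace X]
    (f : X → Y) (g : ℕ → X → Y)
    (hg : ∀ m, Continuous (g m))
    (hconv : ∀ x, Tendsto (fun m => g m x) atTop (nhds (f x)))
    (n : ℕ) (hn : 0 < n) :
    interior {x : X | ∀ δ > 0, ∃ y ∈ Metric.ball x δ, ∃ z ∈ Metric.ball x δ,
      dist (f y) (f z) ≥ 1 / (n : ℝ)} = ∅ := by
  rw [interior_eq_empty_iff_dense_compl]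
  refine (dense_setOf_exists_ball_dist_lt hg hconv (one_div_pos.2 (Nat.cast_pos.2 hn))).mono ?_
  rintro x ⟨δ, hδ, hosc⟩ hD
  obtain ⟨y, hy, z, hz, hyz⟩ := hD δ hδ
  exact (hosc y hy z hz).not_ge hyz

/-- For a Baire-one function `f` between nonempty separable complete metric spaces,
each set `D_{f,n} = {x | ∀ δ > 0, ∃ y z ∈ B(x,δ), d(f y, f z) ≥ 1/n}` has empty interior. -/
theorem stmt_1 {X Y : Type*} [MetricSpace X] [MetricSpace Y]
    [Nonempty X] [Nonempty Y]
    [TopologicalSpace.SeparableSpace X] [TopologicalSpace.SeparableSpace Y]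
    [CompleteSpace X] [CompleteSpace Y]
    (f : X → Y) (g : ℕ → X → Y)
    (hg : ∀ m, Continuous (g m))
    (hconv : ∀ x, Tendsto (fun m => g m x) atTop (nhds (f x)))
    (n : ℕ) (hn : 0 < n) :
    interior {x : X | ∀ δ > 0, ∃ y ∈ Metric.ball x δ, ∃ z ∈ Metric.ball x δ,
      dist (f y) (f z) ≥ 1 / (n : ℝ)} = ∅ :=
  stmt_1_general f g hg hconv n hn
end

section
/- Let E ⊆ ℝ^r be a compact domain, f : E → ℝ^m a function, and (E_α) the sequence of f-removed sets on E. If x ∈ E_α for some ordinal α, then for every ordinal β < α the point x is an accumulation point of E_β, i.e. x lies in the closure of E_β \ {x}. -/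
/-!
The removed sets decrease, so `x ∈ E_α ⊆ E_{β+1}`, i.e. `f↾E_β` is discontinuous at `x`.
But at a point of `E_β` that is not an accumulation point of `E_β`, every function is
continuous within `E_β`.
-/

open Order

theorem antitone_of_succ_le_of_isSuccLimit {ι α : Type*} [LinearOrder ι] [SuccOrder ι]
    [WellFoundedLT ι] [Preorder α] {f : ι → α} (hsucc : ∀ a, f (succ a) ≤ f a)
    (hlim : ∀ a, IsSuccLimit a → ∀ b < a, f a ≤ f b) : Antitone f := by
  intro b a hba
  induction a using WellFoundedLT.induction generalizing b with
  | _ a ih =>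
    obtain rfl | hba := hba.eq_or_lt
    · exact le_rfl
    by_cases ha : IsSuccLimit a
    · exact hlim a ha b hba
    obtain hmin | hnot := not_isSuccLimit_iff.mp ha
    · exact absurd hba hmin.not_lt
    obtain ⟨c, hc, rfl⟩ := not_isSuccPrelimit_iff_succ_eq.mp hnot
    exact (hsucc c).trans (ih c (lt_succ_of_not_isMax hc) (le_of_lt_succ hba))

theorem mem_closure_diff_singleton_of_not_continuousWithinAt {X Y : Type*}
    [TopologicalSpace X] [TopologicalSpace Y] {f : X → Y} {s : Set X} {x : X}
    (hf : ¬ContinuousWithinAt f s x) : x ∈ closure (s \ {x}) := by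
  by_contra hx
  exact hf (continuousWithinAt_sdiff_self.mp (continuousWithinAt_of_notMem_closure hx))

theorem stmt_4_general {r m : ℕ}
    (f : EuclideanSpace ℝ (Fin r) → EuclideanSpace ℝ (Fin m))
    (Es : Ordinal → Set (EuclideanSpace ℝ (Fin r)))
    (hsucc : ∀ α : Ordinal, Es (α + 1) = {x ∈ Es α | ¬ ContinuousWithinAt f (Es α) x})
    (hlim : ∀ α : Ordinal, Order.IsSuccLimit α → Es α = ⋂ β ∈ Set.Iio α, Es β)
    (α : Ordinal) (x : EuclideanSpace ℝ (Fin r)) (hx : x ∈ Es α) :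
    ∀ β < α, x ∈ closure (Es β \ {x}) := by
  have hanti : Antitone Es := by
    refine antitone_of_succ_le_of_isSuccLimit (fun β ↦ ?_) (fun γ hγ β hβ ↦ ?_)
    · rw [succ_eq_add_one, hsucc β]
      exact Set.sep_subset _ _
    · rw [hlim γ hγ]
      exact Set.biInter_subset_of_mem hβ
  intro β hβ
  have hx_succ : x ∈ Es (β + 1) := hanti (add_one_le_iff.mpr hβ) hx
  rw [hsucc β] at hx_succ
  exact mem_closure_diff_singleton_of_not_continuousWithinAt hx_succ.2

/-- If `x` belongs to the `α`-th set of the sequence of `f`-removed sets on a compact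
domain `E`, then `x` is an accumulation point of `E_β` for every `β < α`. -/
theorem stmt_4 {r m : ℕ} (E : Set (EuclideanSpace ℝ (Fin r)))
    (hE : IsCompact E ∧ IsConnected E)
    (f : EuclideanSpace ℝ (Fin r) → EuclideanSpace ℝ (Fin m))
    (Es : Ordinal → Set (EuclideanSpace ℝ (Fin r)))
    (h0 : Es 0 = E)
    (hsucc : ∀ α : Ordinal, Es (α + 1) = {x ∈ Es α | ¬ ContinuousWithinAt f (Es α) x})
    (hlim : ∀ α : Ordinal, Order.IsSuccLimit α → Es α = ⋂ β ∈ Set.Iio α, Es β)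
    (α : Ordinal) (x : EuclideanSpace ℝ (Fin r)) (hx : x ∈ Es α) :
    ∀ β < α, x ∈ closure (Es β \ {x}) :=
  stmt_4_general f Es hsucc hlim α x hx
end

section
/- Let f : ℝ → ℝ be a differentiable function that attains both a positive and a negative value on every nonempty open interval. Then every point at which the derivative f' is continuous satisfies f'(x) = 0; that is, the set S of continuity points of f' is contained in N = {x ∈ ℝ : f'(x) = 0}. -/
/-!
If `f'` is continuous at `x` with `f' x ≠ 0`, then `f'` keeps the sign of `f' x` on an open
interval around `x`, so `f` is monotone or antitone there. A monotone function cannot be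
positive at some point `z₁` and negative at a later point `z₂`, yet the sign hypothesis
produces such a pair inside every interval (and symmetrically for antitone functions).
-/

open Set

section SignChange

variable {α β : Type*} [Preorder α] [Preorder β] [Zero β] {f : α → β}

theorem not_monotoneOn_Ioo_of_forall_pos_neg
    (hf : ∀ x y : α, x < y → (∃ z ∈ Ioo x y, 0 < f z) ∧ (∃ z ∈ Ioo x y, f z < 0))
    {a b : α} (hab : a < b) : ¬ MonotoneOn f (Ioo a b) := by
  intro hmono
  obtain ⟨⟨z₁, hz₁, hpos⟩, -⟩ := hf a b hab
  obtain ⟨-, z₂, hz₂, hneg⟩ := hf z₁ b hz₁.2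
  have hz₂' : z₂ ∈ Ioo a b := ⟨hz₁.1.trans hz₂.1, hz₂.2⟩
  exact (hpos.trans_le (hmono hz₁ hz₂' hz₂.1.le)).not_gt hneg

theorem not_antitoneOn_Ioo_of_forall_pos_neg
    (hf : ∀ x y : α, x < y → (∃ z ∈ Ioo x y, 0 < f z) ∧ (∃ z ∈ Ioo x y, f z < 0))
    {a b : α} (hab : a < b) : ¬ AntitoneOn f (Ioo a b) := by
  intro hanti
  obtain ⟨-, z₁, hz₁, hneg⟩ := hf a b hab
  obtain ⟨⟨z₂, hz₂, hpos⟩, -⟩ := hf z₁ b hz₁.2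
  have hz₂' : z₂ ∈ Ioo a b := ⟨hz₁.1.trans hz₂.1, hz₂.2⟩
  exact (hpos.trans_le (hanti hz₁ hz₂' hz₂.1.le)).not_gt hneg

end SignChange

section DerivSign

variable {f : ℝ → ℝ} {x : ℝ}

theorem exists_Ioo_monotoneOn_of_continuousAt_deriv_pos (hf : Differentiable ℝ f)
    (hx : ContinuousAt (deriv f) x) (hpos : 0 < deriv f x) :
    ∃ a b, a < b ∧ MonotoneOn f (Ioo a b) := by
  obtain ⟨a, b, hxab, hsub⟩ :=
    mem_nhds_iff_exists_Ioo_subset.mp (hx.eventually (lt_mem_nhds hpos))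
  refine ⟨a, b, hxab.1.trans hxab.2, monotoneOn_of_deriv_nonneg (convex_Ioo a b)
    hf.continuous.continuousOn hf.differentiableOn fun y hy => ?_⟩
  rw [interior_Ioo] at hy
  exact (hsub hy).le

theorem exists_Ioo_antitoneOn_of_continuousAt_deriv_neg (hf : Differentiable ℝ f)
    (hx : ContinuousAt (deriv f) x) (hneg : deriv f x < 0) :
    ∃ a b, a < b ∧ AntitoneOn f (Ioo a b) := by
  obtain ⟨a, b, hxab, hsub⟩ :=
    mem_nhds_iff_exists_Ioo_subset.mp (hx.eventually (gt_mem_nhds hneg))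
  refine ⟨a, b, hxab.1.trans hxab.2, antitoneOn_of_deriv_nonpos (convex_Ioo a b)
    hf.continuous.continuousOn hf.differentiableOn fun y hy => ?_⟩
  rw [interior_Ioo] at hy
  exact (hsub hy).le

end DerivSign

/-- If `f : ℝ → ℝ` is differentiable and attains both a positive and a negative value
on every nonempty open interval, then `f'` vanishes at every point where it is
continuous. -/
theorem stmt_9 (f : ℝ → ℝ) (hf : Differentiable ℝ f)
    (hnm : ∀ x y : ℝ, x < y →
      (∃ z ∈ Set.Ioo x y, 0 < f z) ∧ (∃ z ∈ Set.Ioo x y, f z < 0)) :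
    {x : ℝ | ContinuousAt (deriv f) x} ⊆ {x : ℝ | deriv f x = 0} := by
  intro x hx
  by_contra hne
  rcases lt_or_gt_of_ne hne with hneg | hpos
  · obtain ⟨a, b, hab, hanti⟩ := exists_Ioo_antitoneOn_of_continuousAt_deriv_neg hf hx hneg
    exact not_antitoneOn_Ioo_of_forall_pos_neg hnm hab hanti
  · obtain ⟨a, b, hab, hmono⟩ := exists_Ioo_monotoneOn_of_continuousAt_deriv_pos hf hx hpos
    exact not_monotoneOn_Ioo_of_forall_pos_neg hnm hab hmono
end

section
/- Let f : ℝ → ℝ be a differentiable function that attains both a positive and a negative value on every nonempty open interval. Then both the set N = {x ∈ ℝ : f'(x) = 0} and its complement ℝ \ N are dense in ℝ. -/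
/-!
By the intermediate value theorem `f` vanishes in every open interval, and Rolle's theorem
between two such zeros gives a zero of `f'`. On the other hand `f'` cannot vanish on a whole
interval, since `f` would then be constant there.
-/

open Set

lemma dense_setOf_eq_zero_of_forall_sign_change {f : ℝ → ℝ} (hf : Continuous f)
    (hsign : ∀ x y : ℝ, x < y → (∃ z ∈ Ioo x y, 0 < f z) ∧ (∃ z ∈ Ioo x y, f z < 0)) :
    Dense {x : ℝ | f x = 0} := by
  rw [dense_iff_exists_between]
  intro x y hxy
  obtain ⟨⟨a, ha, hfa⟩, b, hb, hfb⟩ := hsign x y hxy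
  have hab : uIcc a b ⊆ Ioo x y := ordConnected_Ioo.uIcc_subset ha hb
  obtain ⟨c, hc, hfc⟩ := intermediate_value_uIcc hf.continuousOn
    (mem_uIcc.2 (Or.inr ⟨hfb.le, hfa.le⟩))
  exact ⟨c, hfc, hab hc⟩

/-- Continuity suffices: where `f` is not differentiable, `deriv f` takes the junk value `0`. -/
lemma dense_setOf_deriv_eq_zero_of_dense {f : ℝ → ℝ} (hf : Continuous f)
    (hzero : Dense {x : ℝ | f x = 0}) : Dense {x : ℝ | deriv f x = 0} := by
  rw [dense_iff_exists_between] at hzero ⊢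
  intro x y hxy
  obtain ⟨m, hxm, hmy⟩ := exists_between hxy
  obtain ⟨a, hfa, hxa, ham⟩ := hzero x m hxm
  obtain ⟨b, hfb, hmb, hby⟩ := hzero m y hmy
  obtain ⟨c, hc, hfc⟩ :=
    exists_deriv_eq_zero (ham.trans hmb) hf.continuousOn (hfa.trans hfb.symm)
  exact ⟨c, hfc, hxa.trans hc.1, hc.2.trans hby⟩

lemma dense_setOf_deriv_ne_zero {f : ℝ → ℝ} (hf : Differentiable ℝ f)
    (hnonconst : ∀ x y : ℝ, x < y → ∃ a ∈ Ioo x y, ∃ b ∈ Ioo x y, f a ≠ f b) :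
    Dense {x : ℝ | deriv f x = 0}ᶜ := by
  rw [dense_iff_exists_between]
  intro x y hxy
  by_contra hnone
  have hzero : EqOn (deriv f) 0 (Ioo x y) := fun c hc =>
    by_contra fun hc' => hnone ⟨c, hc', hc⟩
  obtain ⟨a, ha, b, hb, hfab⟩ := hnonconst x y hxy
  exact hfab (isOpen_Ioo.is_const_of_deriv_eq_zero isPreconnected_Ioo
    hf.differentiableOn hzero ha hb)

/-- If `f : ℝ → ℝ` is differentiable and attains both a positive and a negative value
on every nonempty open interval, then both the zero set of `f'` and its complement
are dense in `ℝ`. -/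
theorem stmt_10 (f : ℝ → ℝ) (hf : Differentiable ℝ f)
    (hnm : ∀ x y : ℝ, x < y →
      (∃ z ∈ Set.Ioo x y, 0 < f z) ∧ (∃ z ∈ Set.Ioo x y, f z < 0)) :
    Dense {x : ℝ | deriv f x = 0} ∧ Dense {x : ℝ | deriv f x = 0}ᶜ := by
  refine ⟨dense_setOf_deriv_eq_zero_of_dense hf.continuous
    (dense_setOf_eq_zero_of_forall_sign_change hf.continuous hnm),
    dense_setOf_deriv_ne_zero hf fun x y hxy => ?_⟩
  obtain ⟨⟨a, ha, hfa⟩, b, hb, hfb⟩ := hnm x y hxy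
  exact ⟨a, ha, b, hb, by linarith⟩
end

section
/- Define y : ℝ → ℝ² by y(t) = (t − 1, G(t − 1)). Then y(−2) = (−3, 9·sin(−1/3)), y is differentiable at every t ∈ [−2,2] (one-sidedly at the endpoints) with derivative y'(t) = (1, g(t − 1)) = (1, g(y₁(t))), and y(t) ∈ [−5,5] × [−15,15] for all t ∈ [−2,2]. In particular, y solves on [−2,2] the initial value problem y'(t) = f(y(t)), y(−2) = (−3, 9·sin(−1/3)), where f : ℝ² → ℝ² is given by f(x, z) = (1, g(x)). -/
/-!
Away from `0`, `G' = g` is the product and chain rule. At `0` the bound `|G x| ≤ x²` makes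
`G x = o(x)`, so `G'(0) = 0 = g(0)`, although `g` is discontinuous there. The same bound gives
`|G(t - 1)| ≤ 9` on `[-2, 2]`.
-/

open Set

noncomputable def gFun (x : ℝ) : ℝ :=
  if x = 0 then 0 else 2 * x * Real.sin (1 / x) - Real.cos (1 / x)

noncomputable def GFun (x : ℝ) : ℝ :=
  if x = 0 then 0 else x ^ 2 * Real.sin (1 / x)

noncomputable def fRHS (p : ℝ × ℝ) : ℝ × ℝ := (1, gFun p.1)

open Filter Topology Asymptotics

theorem abs_GFun_le_sq (x : ℝ) : |GFun x| ≤ x ^ 2 := by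
  rcases eq_or_ne x 0 with rfl | hx
  · simp [GFun]
  · rw [GFun, if_neg hx, abs_mul, abs_pow, sq_abs]
    exact mul_le_of_le_one_right (sq_nonneg x) (Real.abs_sin_le_one _)

theorem hasDerivAt_GFun_zero : HasDerivAt GFun 0 0 := by
  have hGFun : GFun =O[𝓝 0] fun x : ℝ => x ^ 2 :=
    IsBigO.of_bound 1 (Eventually.of_forall fun x => by
      simpa [Real.norm_eq_abs] using abs_GFun_le_sq x)
  rw [hasDerivAt_iff_isLittleO]
  have hGFun_zero : GFun 0 = 0 := if_pos rfl
  simpa [hGFun_zero] using hGFun.trans_isLittleO (isLittleO_pow_id one_lt_two)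

theorem hasDerivAt_GFun_of_ne_zero {x : ℝ} (hx : x ≠ 0) : HasDerivAt GFun (gFun x) x := by
  have hformula : HasDerivAt (fun x : ℝ => x ^ 2 * Real.sin x⁻¹)
      (2 * x * Real.sin x⁻¹ + x ^ 2 * (Real.cos x⁻¹ * -(x ^ 2)⁻¹)) x :=
    (by simpa using hasDerivAt_pow 2 x : HasDerivAt (fun x : ℝ => x ^ 2) (2 * x) x).mul
      ((Real.hasDerivAt_sin x⁻¹).comp x (hasDerivAt_inv hx))
  have heq : GFun =ᶠ[𝓝 x] fun x => x ^ 2 * Real.sin x⁻¹ := by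
    filter_upwards [isOpen_ne.mem_nhds hx] with z hz
    simp [GFun, hz]
  refine (hformula.congr_of_eventuallyEq heq).congr_deriv ?_
  rw [gFun, if_neg hx, one_div]
  field_simp
  ring

theorem hasDerivAt_GFun (x : ℝ) : HasDerivAt GFun (gFun x) x := by
  rcases eq_or_ne x 0 with rfl | hx
  · simpa [gFun] using hasDerivAt_GFun_zero
  · exact hasDerivAt_GFun_of_ne_zero hx

/-- The curve `y(t) = (t − 1, G(t − 1))` satisfies `y(−2) = (−3, 9 sin(−1/3))`, is
differentiable on `[−2,2]` with derivative `y'(t) = (1, g(t−1)) = (1, g(y₁(t))) = f(y(t))`,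
and stays in `[−5,5] × [−15,15]`; hence it solves the IVP `y' = f ∘ y`,
`y(−2) = (−3, 9 sin(−1/3))` on `[−2,2]`. -/
theorem stmt_11 (y : ℝ → ℝ × ℝ) (hy : y = fun t => (t - 1, GFun (t - 1))) :
    y (-2) = (-3, 9 * Real.sin (-(1 / 3))) ∧
    (∀ t ∈ Icc (-2 : ℝ) 2,
      HasDerivWithinAt y (1, gFun (t - 1)) (Icc (-2 : ℝ) 2) t ∧
      (1, gFun (t - 1)) = (1, gFun ((y t).1)) ∧
      (1, gFun (t - 1)) = fRHS (y t)) ∧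
    (∀ t ∈ Icc (-2 : ℝ) 2, y t ∈ Icc (-5 : ℝ) 5 ×ˢ Icc (-15 : ℝ) 15) := by
  subst hy
  refine ⟨?_, fun t _ => ⟨?_, rfl, rfl⟩, fun t ⟨ht₁, ht₂⟩ => ?_⟩
  · norm_num [GFun]
  · have hshift : HasDerivAt (fun t : ℝ => t - 1) 1 t := (hasDerivAt_id t).sub_const 1
    exact (hshift.prodMk ((hasDerivAt_GFun (t - 1)).comp_sub_const t 1)).hasDerivWithinAt
  · have hbound := abs_le.mp ((abs_GFun_le_sq (t - 1)).trans (by nlinarith : (t - 1) ^ 2 ≤ 9))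
    exact ⟨⟨by linarith, by linarith⟩, ⟨by linarith, by linarith⟩⟩
end

section
/- Let h : ℕ → ℕ be injective with h(i) ≥ 1 for all i, and let τ : ℕ → ℝ be defined by τ(i) = 2^{−h(i)/2} if h(i) < i and τ(i) = 2^{−i/2} otherwise. For k ∈ ℕ write T_{k+1} = Σ_{i=k+1}^∞ τ(i). Then (Σ_{i=k+2}^∞ 2^{−h(i)}) / T_{k+1} → 0 as k → ∞. -/
/-!
Put `g i = 2^{-h(i)/2}`, so that `2^{-h(i)} = g(i)^2` and `τ(i) = max (g i) (2^{-i/2})`;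
both `g` (by injectivity of `h`) and `τ` are summable. Every `g i` with `i ≥ k + 2` is at most
`τ i ≤ T_{k+1}`, hence `Σ_{i ≥ k+2} g(i)^2 ≤ T_{k+1} · Σ_{i ≥ k+2} g(i)`, and the ratio is
bounded by a tail of the convergent series `Σ g`.
-/

open Filter Topology

lemma tsum_sq_le_mul_tsum {ι : Type*} {f : ι → ℝ} {M : ℝ} (hf : Summable f)
    (hf0 : ∀ i, 0 ≤ f i) (hfM : ∀ i, f i ≤ M) : ∑' i, f i ^ 2 ≤ M * ∑' i, f i := by
  have hle : ∀ i, f i ^ 2 ≤ M * f i := fun i => by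
    rw [sq]; exact mul_le_mul_of_nonneg_right (hfM i) (hf0 i)
  rw [← tsum_mul_left]
  exact (hf.mul_left M).of_nonneg_of_le (fun i => sq_nonneg _) hle |>.tsum_le_tsum hle
    (hf.mul_left M)

theorem tendsto_tsum_sq_shift_div_tsum_shift {g τ : ℕ → ℝ} (hg0 : ∀ i, 0 ≤ g i)
    (hgτ : ∀ i, g i ≤ τ i) (hτ : Summable τ) :
    Tendsto (fun k => (∑' i, g (k + 2 + i) ^ 2) / ∑' i, τ (k + 1 + i)) atTop (𝓝 0) := by
  have hg : Summable g := hτ.of_nonneg_of_le hg0 hgτ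
  have htail : Tendsto (fun k => ∑' i, g (k + 2 + i)) atTop (𝓝 0) := by
    refine ((tendsto_sum_nat_add g).comp (tendsto_add_atTop_nat 2)).congr fun k => ?_
    exact tsum_congr fun i => congrArg g (add_comm i (k + 2))
  refine squeeze_zero (fun k => ?_) (fun k => ?_) htail
  · exact div_nonneg (tsum_nonneg fun i => sq_nonneg _)
      (tsum_nonneg fun i => (hg0 _).trans (hgτ _))
  · set T := ∑' i, τ (k + 1 + i)
    have hτk : Summable fun i => τ (k + 1 + i) := hτ.comp_injective (add_right_injective _)
    have hgT : ∀ i, g (k + 2 + i) ≤ T := fun i =>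
      calc g (k + 2 + i) ≤ τ (k + 1 + (1 + i)) := by
            rw [← add_assoc, add_assoc k]; exact hgτ _
        _ ≤ T := hτk.le_tsum _ fun j _ => (hg0 _).trans (hgτ _)
    have hT0 : 0 ≤ T := tsum_nonneg fun i => (hg0 _).trans (hgτ _)
    rcases hT0.eq_or_lt with hT | hT
    · rw [← hT, div_zero]
      exact tsum_nonneg fun i => hg0 _
    · rw [div_le_iff₀ hT, mul_comm]
      exact tsum_sq_le_mul_tsum (hg.comp_injective (add_right_injective _)) (fun i => hg0 _) hgT

lemma two_rpow_neg_div_two_natCast (n : ℕ) :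
    (2 : ℝ) ^ (-(n : ℝ) / 2) = ((2 : ℝ) ^ (-(1 : ℝ) / 2)) ^ n := by
  rw [← Real.rpow_natCast, ← Real.rpow_mul zero_le_two]
  ring_nf

lemma summable_two_rpow_neg_div_two_comp {ι : Type*} {h : ι → ℕ}
    (hinj : Function.Injective h) :
    Summable fun i => (2 : ℝ) ^ (-(h i : ℝ) / 2) := by
  have hq : (2 : ℝ) ^ (-(1 : ℝ) / 2) < 1 :=
    Real.rpow_lt_one_of_one_lt_of_neg one_lt_two (by norm_num)
  simpa only [Function.comp_def, two_rpow_neg_div_two_natCast] using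
    (summable_geometric_of_lt_one (by positivity) hq).comp_injective hinj

lemma two_rpow_neg_eq_sq (x : ℝ) : (2 : ℝ) ^ (-x) = ((2 : ℝ) ^ (-x / 2)) ^ 2 := by
  rw [sq, ← Real.rpow_add two_pos]
  ring_nf

theorem stmt_18_general (h : ℕ → ℕ) (hinj : Function.Injective h)
    (τ : ℕ → ℝ)
    (hτ : ∀ i, τ i =
      if h i < i then (2 : ℝ) ^ (-(h i : ℝ) / 2) else (2 : ℝ) ^ (-(i : ℝ) / 2)) :
    Tendsto (fun k : ℕ =>
        (∑' i : ℕ, (2 : ℝ) ^ (-(h (k + 2 + i) : ℝ))) / (∑' i : ℕ, τ (k + 1 + i)))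
      atTop (nhds 0) := by
  set g : ℕ → ℝ := fun i => (2 : ℝ) ^ (-(h i : ℝ) / 2)
  have hτ_max : ∀ i, τ i = max (g i) ((2 : ℝ) ^ (-(i : ℝ) / 2)) := fun i => by
    rw [hτ i]
    split_ifs with hlt
    · exact (max_eq_left (Real.rpow_le_rpow_of_exponent_le one_le_two (by gcongr))).symm
    · exact (max_eq_right (Real.rpow_le_rpow_of_exponent_le one_le_two (by gcongr; omega))).symm
  have hg0 : ∀ i, 0 ≤ g i := fun i => by positivity
  have hgτ : ∀ i, g i ≤ τ i := fun i => hτ_max i ▸ le_max_left _ _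
  have hτsum : Summable τ :=
    ((summable_two_rpow_neg_div_two_comp hinj).add
      (summable_two_rpow_neg_div_two_comp Function.injective_id)).of_nonneg_of_le
      (fun i => (hg0 i).trans (hgτ i))
      (fun i => hτ_max i ▸ max_le_add_of_nonneg (hg0 i) (by positivity))
  simpa only [g, ← two_rpow_neg_eq_sq] using
    tendsto_tsum_sq_shift_div_tsum_shift hg0 hgτ hτsum

/-- With `τ` as in the construction, writing `T_{k+1} = Σ_{i=k+1}^∞ τ(i)`, the ratio
`(Σ_{i=k+2}^∞ 2^{−h(i)}) / T_{k+1}` tends to `0` as `k → ∞`. -/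
theorem stmt_18 (h : ℕ → ℕ) (hinj : Function.Injective h) (hpos : ∀ i, 1 ≤ h i)
    (τ : ℕ → ℝ)
    (hτ : ∀ i, τ i =
      if h i < i then (2 : ℝ) ^ (-(h i : ℝ) / 2) else (2 : ℝ) ^ (-(i : ℝ) / 2)) :
    Tendsto (fun k : ℕ =>
        (∑' i : ℕ, (2 : ℝ) ^ (-(h (k + 2 + i) : ℝ))) / (∑' i : ℕ, τ (k + 1 + i)))
      atTop (nhds 0) :=
  stmt_18_general h hinj τ hτ
end
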